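/- Let M be a definably complete locally o-minimal structure and let Γ ⊆ M² be a definable set such that every vertical fiber Γ ∩ ({y} × M) is discrete. Let X be the set of points (y, x) ∈ Γ that have an open box neighborhood B with B ∩ Γ equal to the graph of a constant function on π₁(B), where π₁ is the projection to the first coordinate. Then the projection π₂(X) of X to the second coordinate is discrete and closed. -/

import Mathlib

open FirstOrder Set

namespace Paper

variable (L : FirstOrder.Language)

/-- A subset of `Mⁿ` definable with arbitrary parameters from `M`. -/
def Def (M : Type*) [L.Structure M] {n : ℕ} (s : Set (Fin n → M)) : Prop :=
  Set.Definable (Set.univ : Set M) L s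

/-- A subset of `M` definable with arbitrary parameters from `M`. -/
def Def1 (M : Type*) [L.Structure M] (s : Set M) : Prop :=
  Def L M {f : Fin 1 → M | f 0 ∈ s}

/-- A subset of `M × M` definable with arbitrary parameters from `M`. -/
def Def2 (M : Type*) [L.Structure M] (s : Set (M × M)) : Prop :=
  Def L M {f : Fin 2 → M | (f 0, f 1) ∈ s}

/-- A discrete subset of a topological space. -/
def IsDiscrete {X : Type*} [TopologicalSpace X] (s : Set X) : Prop :=
  ∀ x ∈ s, ∃ U : Set X, IsOpen U ∧ x ∈ U ∧ U ∩ s = {x}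

/-- An open interval (with possibly infinite endpoints). -/
def IsOInterval {M : Type*} [Preorder M] (s : Set M) : Prop :=
  (∃ a b : M, s = Set.Ioo a b) ∨ (∃ a, s = Set.Ioi a) ∨ (∃ b, s = Set.Iio b) ∨ s = Set.univ

/-- A finite union of points and open intervals. -/
def FinUnionPtsIntervals {M : Type*} [Preorder M] (s : Set M) : Prop :=
  ∃ (F : Finset M) (n : ℕ) (J : Fin n → Set M),
    (∀ i, IsOInterval (J i)) ∧ s = ↑F ∪ ⋃ i, J i

/-- Local o-minimality. -/
def LocallyOMinimal (M : Type*) [L.Structure M] [LinearOrder M] : Prop :=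
  ∀ s : Set M, Def1 L M s → ∀ a : M,
    ∃ I : Set M, IsOInterval I ∧ a ∈ I ∧ FinUnionPtsIntervals (s ∩ I)

/-- Definable completeness. -/
def DefinablyComplete (M : Type*) [L.Structure M] [LinearOrder M] : Prop :=
  ∀ s : Set M, Def1 L M s → s.Nonempty →
    (BddAbove s → ∃ a, IsLUB s a) ∧ (BddBelow s → ∃ a, IsGLB s a)

/-- A coordinate projection of `X ⊆ Mⁿ` to `M^d` has image with nonempty interior. -/
def HasDimWit {M : Type*} [TopologicalSpace M] {n : ℕ} (X : Set (Fin n → M)) (d : ℕ) : Prop :=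
  ∃ σ : Fin d ↪ Fin n, (interior ((fun x => x ∘ σ) '' X)).Nonempty

/-- The projection dimension of a subset of `Mⁿ`, with `projDim ∅ = ⊥ = -∞`. -/
noncomputable def projDim {M : Type*} [TopologicalSpace M] {n : ℕ}
    (X : Set (Fin n → M)) : WithBot ℕ∞ :=
  ⨆ d ∈ {d : ℕ | HasDimWit X d}, ((d : ℕ∞) : WithBot ℕ∞)

/-- The discrete closure of `A ⊆ M`. -/
def discl (M : Type*) [L.Structure M] [TopologicalSpace M] (A : Set M) : Set M :=
  {x | ∃ s : Set M, Set.Definable A L {f : Fin 1 → M | f 0 ∈ s} ∧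
    IsDiscrete s ∧ IsClosed s ∧ x ∈ s}


end Paper

/-!
Near each of its points the locally constant part `X` of `Γ` is a horizontal segment, so its
horizontal fibres are open and its vertical fibres are discrete. By local o-minimality a definable
subset of `M` containing no interval is discrete and closed, so it suffices that `π₂ X` contain no
interval, a consequence of `dim X ≤ 1` that we obtain without dimension theory.

Definable completeness and local o-minimality give a definable Baire property (the union of a
definable chain of interval-free sets is interval-free) and, from it, that the union of a definable
family of interval-free sets indexed by an interval-free set bounded below is interval-free. If
`π₂ X` contained an interval, then over a smaller interval the least left endpoint `ζ x` above a
fixed `c` of the horizontal fibre of `X` over `x` would be a definable function. If its range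
contains no interval, some fibre of `ζ` contains an interval, and segments with a common left end
over an interval contradict the Baire property. If its range contains an interval, some vertical
line crosses the segments starting at all points of an interval; their heights lie in the discrete
vertical fibre of `X` and determine their left ends, which the second fact rules out.
-/

open Filter Topology

namespace Paper

/-- First-order formulas with `k` free variables whose atoms compare two arguments or test their
membership in a definable set; an argument is a variable `.inl i` or a parameter `.inr c`.
Variables are de Bruijn indices: `ex` and `all` bind `.inl 0` and shift the others up by one. -/
inductive RelFormula (L : FirstOrder.Language) (M : Type*) [L.Structure M] : ℕ → Type _
  | le {k} (s t : Fin k ⊕ M) : RelFormula L M k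
  | lt {k} (s t : Fin k ⊕ M) : RelFormula L M k
  | eq {k} (s t : Fin k ⊕ M) : RelFormula L M k
  | mem {k} (S : Set M) (hS : Def1 L M S) (s : Fin k ⊕ M) : RelFormula L M k
  | rel {k} (R : Set (M × M)) (hR : Def2 L M R) (s t : Fin k ⊕ M) : RelFormula L M k
  | not {k} (φ : RelFormula L M k) : RelFormula L M k
  | and {k} (φ ψ : RelFormula L M k) : RelFormula L M k
  | or {k} (φ ψ : RelFormula L M k) : RelFormula L M k
  | imp {k} (φ ψ : RelFormula L M k) : RelFormula L M k
  | ex {k} (φ : RelFormula L M (k + 1)) : RelFormula L M k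
  | all {k} (φ : RelFormula L M (k + 1)) : RelFormula L M k

namespace RelFormula

variable {L : FirstOrder.Language} {M : Type*} [L.Structure M]

lemma definable_atom {k : ℕ} {S : Set (Fin 2 → M)} (hS : (univ : Set M).Definable L S)
    (s t : Fin k ⊕ M) :
    (univ : Set M).Definable L {v | ![Sum.elim v id s, Sum.elim v id t] ∈ S} := by
  have harg (u : Fin k ⊕ M) : (univ : Set M).DefinableFun L fun v => Sum.elim v id u := by
    cases u with
    | inl i => exact DefinableFun.proj L
    | inr c => exact L.definableFun_const _ (mem_univ c)
  refine hS.preimage_map (F := fun v => ![Sum.elim v id s, Sum.elim v id t]) fun i => ?_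
  fin_cases i
  exacts [harg s, harg t]

lemma definable_exists {k : ℕ} {S : Set (Fin (k + 1) → M)} (hS : (univ : Set M).Definable L S) :
    (univ : Set M).Definable L {v | ∃ a, Fin.cons a v ∈ S} := by
  convert hS.image_comp (Fin.succ : Fin k → Fin (k + 1)) using 1
  ext v
  constructor
  · rintro ⟨a, ha⟩
    exact ⟨Fin.cons a v, ha, rfl⟩
  · rintro ⟨w, hw, rfl⟩
    exact ⟨w 0, by convert hw; exact Fin.cons_self_tail w⟩

variable [LinearOrder M]

def Realize : ∀ {k}, RelFormula L M k → (Fin k → M) → Prop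
  | _, le s t, v => Sum.elim v id s ≤ Sum.elim v id t
  | _, lt s t, v => Sum.elim v id s < Sum.elim v id t
  | _, eq s t, v => Sum.elim v id s = Sum.elim v id t
  | _, mem S _ s, v => Sum.elim v id s ∈ S
  | _, rel R _ s t, v => (Sum.elim v id s, Sum.elim v id t) ∈ R
  | _, not φ, v => ¬ φ.Realize v
  | _, and φ ψ, v => φ.Realize v ∧ ψ.Realize v
  | _, or φ ψ, v => φ.Realize v ∨ ψ.Realize v
  | _, imp φ ψ, v => φ.Realize v → ψ.Realize v
  | _, ex φ, v => ∃ a, φ.Realize (Fin.cons a v)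
  | _, all φ, v => ∀ a, φ.Realize (Fin.cons a v)

variable [L.IsOrdered] [L.OrderedStructure M]

lemma definable_le : (univ : Set M).Definable L {f : Fin 2 → M | f 0 ≤ f 1} :=
  (Set.empty_definable_iff.2 ⟨(Language.Term.var (Sum.inl 0)).le (Language.Term.var (Sum.inl 1)),
    by ext; simp [Language.Formula.Realize]⟩).mono (empty_subset _)

lemma definable_lt : (univ : Set M).Definable L {f : Fin 2 → M | f 0 < f 1} :=
  (Set.empty_definable_iff.2 ⟨(Language.Term.var (Sum.inl 0)).lt (Language.Term.var (Sum.inl 1)),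
    by ext; simp [Language.Formula.Realize]⟩).mono (empty_subset _)

theorem definable_realize : ∀ {k} (φ : RelFormula L M k),
    (univ : Set M).Definable L {v | φ.Realize v}
  | _, le s t => definable_atom definable_le s t
  | _, lt s t => definable_atom definable_lt s t
  | _, eq s t => definable_atom (Set.Definable.diagonal L univ) s t
  | _, mem _ hS s => definable_atom (hS.preimage_comp ![0]) s s
  | _, rel _ hR s t => definable_atom hR s t
  | _, not φ => φ.definable_realize.compl
  | _, and φ ψ => φ.definable_realize.inter ψ.definable_realize
  | _, or φ ψ => φ.definable_realize.union ψ.definable_realize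
  | _, imp φ ψ => by
    convert φ.definable_realize.compl.union ψ.definable_realize using 1
    ext v
    exact imp_iff_not_or
  | _, ex φ => definable_exists φ.definable_realize
  | _, all φ => by
    convert (definable_exists φ.definable_realize.compl).compl using 1
    ext v
    simp [Realize]

/- For a concrete `φ` the set below unfolds to the set that `φ` describes, so `def1 φ` proves that
set definable; `φ` must be elaborated against the expected type, as `def1 (…)`, not `(…).def1`. -/
theorem def1 (φ : RelFormula L M 1) : Def1 L M {x | φ.Realize ![x]} := by
  have h : {f : Fin 1 → M | f 0 ∈ {x | φ.Realize ![x]}} = {f | φ.Realize f} := by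
    ext f
    show φ.Realize ![f 0] ↔ φ.Realize f
    rw [show ![f 0] = f by ext i; fin_cases i; rfl]
  unfold Def1 Def
  rw [h]
  exact φ.definable_realize

theorem def2 (φ : RelFormula L M 2) : Def2 L M {p : M × M | φ.Realize ![p.1, p.2]} := by
  have h : {f : Fin 2 → M | (f 0, f 1) ∈ {p : M × M | φ.Realize ![p.1, p.2]}} =
      {f | φ.Realize f} := by
    ext f
    show φ.Realize ![f 0, f 1] ↔ φ.Realize f
    rw [show ![f 0, f 1] = f by ext i; fin_cases i <;> rfl]
  unfold Def2 Def
  rw [h]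
  exact φ.definable_realize

end RelFormula

open RelFormula

section Definability

variable {L : FirstOrder.Language} {M : Type*} [L.IsOrdered] [LinearOrder M] [L.Structure M]
  [L.OrderedStructure M] {R : Set (M × M)}

lemma Def2.fiber_fst (hR : Def2 L M R) (t : M) : Def1 L M {x | (t, x) ∈ R} :=
  def1 (rel R hR (.inr t) (.inl 0))

lemma Def2.fiber_snd (hR : Def2 L M R) (t : M) : Def1 L M {x | (x, t) ∈ R} :=
  def1 (rel R hR (.inl 0) (.inr t))

lemma Def2.image_snd (hR : Def2 L M R) : Def1 L M (Prod.snd '' R) := by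
  convert def1 (ex (rel R hR (.inl 0) (.inl 1))) using 1
  ext x
  simp [Realize]

end Definability


section NoInterval

variable {M : Type*} [LinearOrder M]

def NoInterval (s : Set M) : Prop := ∀ ⦃a b : M⦄, a < b → ¬ Ioo a b ⊆ s

lemma NoInterval.mono {s t : Set M} (ht : NoInterval t) (hst : s ⊆ t) : NoInterval s :=
  fun _ _ hab h => ht hab (h.trans hst)

lemma noInterval_of_subsingleton [DenselyOrdered M] {s : Set M} (hs : s.Subsingleton) :
    NoInterval s := by
  intro a b hab h
  obtain ⟨c, hac, hcb⟩ := exists_between hab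
  obtain ⟨d, hcd, hdb⟩ := exists_between hcb
  exact hcd.ne (hs (h ⟨hac, hcd.trans hdb⟩) (h ⟨hac.trans hcd, hdb⟩))

lemma IsOInterval.isOpen [TopologicalSpace M] [OrderTopology M] {I : Set M} (hI : IsOInterval I) :
    IsOpen I := by
  rcases hI with ⟨a, b, rfl⟩ | ⟨a, rfl⟩ | ⟨b, rfl⟩ | rfl
  exacts [isOpen_Ioo, isOpen_Ioi, isOpen_Iio, isOpen_univ]

variable {L : FirstOrder.Language} [L.Structure M] [NoMaxOrder M] [NoMinOrder M]

theorem LocallyOMinimal.exists_Ioo_inter_subset (hlo : LocallyOMinimal L M) {s : Set M}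
    (hs : Def1 L M s) (hni : NoInterval s) (x : M) :
    ∃ a b, a < x ∧ x < b ∧ s ∩ Ioo a b ⊆ {x} := by
  let _ : TopologicalSpace M := Preorder.topology M
  have _ : OrderTopology M := ⟨rfl⟩
  obtain ⟨I, hI, hxI, F, n, J, hJ, hsI⟩ := hlo s hs x
  have hsF : s ∩ I ⊆ F := by
    rw [hsI]
    rintro w (hw | hw)
    · exact hw
    obtain ⟨i, hwi⟩ := mem_iUnion.1 hw
    obtain ⟨a, b, ⟨haw, hwb⟩, hab⟩ := mem_nhds_iff_exists_Ioo_subset.1 ((hJ i).isOpen.mem_nhds hwi)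
    refine absurd (fun y hy => ?_) (hni (haw.trans hwb))
    exact (hsI.symm.subset (Or.inr (mem_iUnion.2 ⟨i, hab hy⟩))).1
  have hnhds : (↑(F.erase x) : Set M)ᶜ ∩ I ∈ 𝓝 x :=
    inter_mem ((F.erase x).finite_toSet.isClosed.isOpen_compl.mem_nhds (by simp))
      (hI.isOpen.mem_nhds hxI)
  obtain ⟨a, b, ⟨hax, hxb⟩, hab⟩ := mem_nhds_iff_exists_Ioo_subset.1 hnhds
  refine ⟨a, b, hax, hxb, fun w ⟨hws, hw⟩ => ?_⟩
  by_contra hwx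
  exact (hab hw).1 (Finset.mem_erase.2 ⟨hwx, hsF ⟨hws, (hab hw).2⟩⟩)

theorem LocallyOMinimal.exists_Ioo_subset_of_inter_Ioc_nonempty [DenselyOrdered M]
    (hlo : LocallyOMinimal L M) {s : Set M} (hs : Def1 L M s) {c d : M} (hcd : c < d)
    (h : ∀ x ∈ Ioo c d, (s ∩ Ioc c x).Nonempty) : ∃ a b, a < b ∧ Ioo a b ⊆ s := by
  by_contra! hni
  obtain ⟨a, b, hac, hcb, hab⟩ := hlo.exists_Ioo_inter_subset hs (fun a b => hni a b) c
  obtain ⟨x, hcx, hxbd⟩ := exists_between (lt_min hcb hcd)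
  obtain ⟨w, hws, hcw, hwx⟩ := h x ⟨hcx, hxbd.trans_le (min_le_right _ _)⟩
  exact hcw.ne' (hab ⟨hws, hac.trans hcw, hwx.trans_lt (hxbd.trans_le (min_le_left _ _))⟩)

theorem LocallyOMinimal.exists_isLeast (hlo : LocallyOMinimal L M) (hdc : DefinablyComplete L M)
    {s : Set M} (hs : Def1 L M s) (hni : NoInterval s) (hne : s.Nonempty) (hbdd : BddBelow s) :
    ∃ m, IsLeast s m := by
  obtain ⟨m, hm⟩ := (hdc s hs hne).2 hbdd
  refine ⟨m, ?_, hm.1⟩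
  by_contra hms
  obtain ⟨a, b, ham, hmb, hab⟩ := hlo.exists_Ioo_inter_subset hs hni m
  obtain ⟨w, hws, hmw, hwb⟩ := hm.exists_between hmb
  exact hms (hab ⟨hws, ham.trans_le hmw, hwb⟩ ▸ hws)

theorem LocallyOMinimal.exists_isGreatest (hlo : LocallyOMinimal L M)
    (hdc : DefinablyComplete L M) {s : Set M} (hs : Def1 L M s) (hni : NoInterval s)
    (hne : s.Nonempty) (hbdd : BddAbove s) : ∃ m, IsGreatest s m := by
  obtain ⟨m, hm⟩ := (hdc s hs hne).1 hbdd
  refine ⟨m, ?_, hm.1⟩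
  by_contra hms
  obtain ⟨a, b, ham, hmb, hab⟩ := hlo.exists_Ioo_inter_subset hs hni m
  obtain ⟨w, hws, haw, hwm⟩ := hm.exists_between ham
  exact hms (hab ⟨hws, haw, hwm.trans_lt hmb⟩ ▸ hws)

theorem LocallyOMinimal.isDiscrete_and_isClosed [TopologicalSpace M] [OrderTopology M]
    (hlo : LocallyOMinimal L M) {s : Set M} (hs : Def1 L M s) (hni : NoInterval s) :
    IsDiscrete s ∧ IsClosed s := by
  refine ⟨fun x hx => ?_, isClosed_of_closure_subset fun x hx => ?_⟩ <;>
    obtain ⟨a, b, hax, hxb, hab⟩ := hlo.exists_Ioo_inter_subset hs hni x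
  · refine ⟨Ioo a b, isOpen_Ioo, ⟨hax, hxb⟩, subset_antisymm (fun w hw => hab ⟨hw.2, hw.1⟩) ?_⟩
    exact singleton_subset_iff.2 ⟨⟨hax, hxb⟩, hx⟩
  · obtain ⟨w, hw, hws⟩ := mem_closure_iff.1 hx (Ioo a b) isOpen_Ioo ⟨hax, hxb⟩
    exact (hab ⟨hws, hw⟩ : w = x) ▸ hws

end NoInterval

section LeftEndpoints

variable {M : Type*} [LinearOrder M]

/-- `c` counts as a left endpoint when `T` contains a right neighbourhood of it, so that for open `T`
meeting `(c, ∞)` the set is nonempty. -/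
def leftEndpointsAbove (T : Set M) (c : M) : Set M :=
  {ζ | c ≤ ζ ∧ (ζ = c ∨ ζ ∉ T) ∧ ∃ w, ζ < w ∧ Ioo ζ w ⊆ T}

lemma noInterval_leftEndpointsAbove [DenselyOrdered M] (T : Set M) (c : M) :
    NoInterval (leftEndpointsAbove T c) := by
  intro p q hpq hsub
  obtain ⟨ζ₁, hpζ₁, hζ₁q⟩ := exists_between hpq
  obtain ⟨hcζ₁, -, w, hζ₁w, hw⟩ := hsub ⟨hpζ₁, hζ₁q⟩
  obtain ⟨ζ₂, hζ₁ζ₂, hζ₂⟩ := exists_between (lt_min hζ₁w hζ₁q)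
  obtain ⟨-, hζ₂c | hζ₂T, -⟩ := hsub ⟨hpζ₁.trans hζ₁ζ₂, hζ₂.trans_le (min_le_right _ _)⟩
  · exact (hcζ₁.trans_lt hζ₁ζ₂).ne' hζ₂c
  · exact hζ₂T (hw ⟨hζ₁ζ₂, hζ₂.trans_le (min_le_left _ _)⟩)

lemma noInterval_setOf_isLeast_of_initial_segments [DenselyOrdered M] {C : Set (M × M)}
    (hCsub : ∀ ζ y, (ζ, y) ∈ C → ζ < y)
    (hCdown : ∀ ζ y y', (ζ, y) ∈ C → ζ < y' → y' < y → (ζ, y') ∈ C)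
    (hni : ∀ y, NoInterval {ζ | (ζ, y) ∈ C}) :
    NoInterval {ζ | ∃ y, IsLeast {ζ' | (ζ', y) ∈ C} ζ} := by
  -- along an interval of least elements the sets `{y | (ζ, y) ∈ C}` grow with `ζ`, so their
  -- common part is covered by a whole interval of `ζ`
  intro ρ₁ ρ₂ hρ hsub
  obtain ⟨ζ₁, hρζ₁, hζ₁ρ⟩ := exists_between hρ
  obtain ⟨y₁, hy₁⟩ := hsub ⟨hρζ₁, hζ₁ρ⟩
  obtain ⟨y, hζ₁y, hy⟩ := exists_between (lt_min (hCsub _ _ hy₁.1) hζ₁ρ)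
  refine hni y hζ₁y fun ζ hζ => ?_
  obtain ⟨y₂, hy₂⟩ := hsub ⟨hρζ₁.trans hζ.1, hζ.2.trans (hy.trans_le (min_le_right _ _))⟩
  have hy₁y₂ : y₁ ≤ y₂ := by
    by_contra! h
    exact (hy₂.2 (hCdown _ _ _ hy₁.1 (hζ.1.trans (hCsub _ _ hy₂.1)) h)).not_gt hζ.1
  exact hCdown _ _ _ hy₂.1 hζ.2 ((hy.trans_le (min_le_left _ _)).trans_le hy₁y₂)

variable {L : FirstOrder.Language} [L.IsOrdered] [L.Structure M] [L.OrderedStructure M]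

theorem DefinablyComplete.leftEndpointsAbove_nonempty (hdc : DefinablyComplete L M) {T : Set M}
    (hT : Def1 L M T) (hopen : ∀ y ∈ T, ∃ y' < y, Ioo y' y ⊆ T) {c y : M} (hy : y ∈ T)
    (hcy : c < y) : (leftEndpointsAbove T c).Nonempty := by
  set D : Set M := {ζ | c ≤ ζ ∧ ζ < y ∧ Ioc ζ y ⊆ T}
  have hD : Def1 L M D := def1 (and (le (.inr c) (.inl 0)) (and (lt (.inl 0) (.inr y))
    (all (imp (and (lt (.inl 1) (.inl 0)) (le (.inl 0) (.inr y))) (mem T hT (.inl 0))))))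
  have hext : ∀ ζ ∈ T, c < ζ → ζ ≤ y → Ioc ζ y ⊆ T → ∃ ζ' ∈ D, ζ' < ζ := by
    intro ζ hζT hcζ hζy hζ
    obtain ⟨y', hy'ζ, hy'⟩ := hopen ζ hζT
    refine ⟨max c y', ⟨le_max_left _ _, (max_lt hcζ hy'ζ).trans_le hζy, fun w hw => ?_⟩,
      max_lt hcζ hy'ζ⟩
    rcases lt_trichotomy w ζ with h | rfl | h
    exacts [hy' ⟨(le_max_right _ _).trans_lt hw.1, h⟩, hζT, hζ ⟨h, hw.2⟩]
  obtain ⟨ζ₁, hζ₁, -⟩ := hext y hy hcy le_rfl (by simp)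
  obtain ⟨ζ₀, hζ₀⟩ := (hdc D hD ⟨ζ₁, hζ₁⟩).2 ⟨c, fun _ h => h.1⟩
  have hcζ₀ : c ≤ ζ₀ := hζ₀.2 fun _ h => h.1
  have hζ₀y : ζ₀ < y := (hζ₀.1 hζ₁).trans_lt hζ₁.2.1
  have hIoc : Ioc ζ₀ y ⊆ T := fun w hw => by
    obtain ⟨ζ, hζ, -, hζw⟩ := hζ₀.exists_between hw.1
    exact hζ.2.2 ⟨hζw, hw.2⟩
  refine ⟨ζ₀, hcζ₀, ?_, y, hζ₀y, Ioo_subset_Ioc_self.trans hIoc⟩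
  by_contra! h
  obtain ⟨ζ', hζ', hζ'ζ₀⟩ := hext ζ₀ h.2 (hcζ₀.lt_of_ne h.1.symm) hζ₀y.le hIoc
  exact (hζ₀.1 hζ').not_gt hζ'ζ₀

end LeftEndpoints

section Families

variable {L : FirstOrder.Language} {M : Type*} [L.IsOrdered] [LinearOrder M] [L.Structure M]
  [L.OrderedStructure M] [DenselyOrdered M] [NoMaxOrder M] [NoMinOrder M]

theorem LocallyOMinimal.noInterval_image_snd_of_isChain (hlo : LocallyOMinimal L M)
    (hdc : DefinablyComplete L M) {R : Set (M × M)} (hR : Def2 L M R)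
    (hchain : IsChain (· ≤ ·) (range fun t => {x | (t, x) ∈ R}))
    (hfib : ∀ t, NoInterval {x | (t, x) ∈ R}) : NoInterval (Prod.snd '' R) := by
  intro c d hcd hcov
  set R' : Set (M × M) := {p | p ∈ R ∧ c < p.2 ∧ p.2 < d}
  have hR' : Def2 L M R' := def2 (and (rel R hR (.inl 0) (.inl 1))
    (and (lt (.inr c) (.inl 1)) (lt (.inl 1) (.inr d))))
  have hfib' (t : M) : NoInterval {x | (t, x) ∈ R'} := (hfib t).mono fun _ h => h.1
  have hleast : ∀ x ∈ Ioo c d, ∃ t m, IsLeast {x | (t, x) ∈ R'} m ∧ m ≤ x := by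
    rintro x hx
    obtain ⟨⟨t, x⟩, htx, rfl⟩ := hcov hx
    obtain ⟨m, hm⟩ := hlo.exists_isLeast hdc (hR'.fiber_fst t) (hfib' t) ⟨x, htx, hx⟩
      ⟨c, fun _ h => h.2.1.le⟩
    exact ⟨t, m, hm, hm.2 ⟨htx, hx⟩⟩
  set K : Set M := {m | ∃ t, IsLeast {x | (t, x) ∈ R'} m}
  have hK : Def1 L M K := def1 (ex (and (rel R' hR' (.inl 0) (.inl 1))
    (all (imp (rel R' hR' (.inl 1) (.inl 0)) (le (.inl 2) (.inl 0))))))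
  obtain ⟨p, q, hpq, hpqK⟩ := hlo.exists_Ioo_subset_of_inter_Ioc_nonempty hK hcd fun x hx => by
    obtain ⟨t, m, hm, hmx⟩ := hleast x hx
    exact ⟨m, ⟨t, hm⟩, hm.1.2.1, hmx⟩
  obtain ⟨x₀, hpx₀, hx₀q⟩ := exists_between hpq
  obtain ⟨_, hx₀⟩ := hpqK ⟨hpx₀, hx₀q⟩
  obtain ⟨x₁, hcx₁, hx₁x₀⟩ := exists_between hx₀.1.2.1
  obtain ⟨t₁, m₁, hm₁, hm₁x₁⟩ := hleast x₁ ⟨hcx₁, hx₁x₀.trans hx₀.1.2.2⟩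
  obtain ⟨a, b, hax₀, hx₀b, hab⟩ := hlo.exists_Ioo_inter_subset (hR'.fiber_fst t₁) (hfib' t₁) x₀
  -- a least element `w` just below `x₀` contradicts the comparability of the fibres over `t₁`, `t`
  obtain ⟨w, hw, hwx₀⟩ := exists_between (max_lt (max_lt hax₀ (hm₁x₁.trans_lt hx₁x₀)) hpx₀)
  obtain ⟨t, hwt⟩ := hpqK ⟨(le_max_right _ _).trans_lt hw, hwx₀.trans hx₀q⟩
  have hmw : m₁ < w := (le_max_right _ _).trans_lt ((le_max_left _ _).trans_lt hw)
  rcases hchain.total (mem_range_self t) (mem_range_self t₁) with h | h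
  · refine hwx₀.ne (hab ⟨⟨h hwt.1.1, hwt.1.2⟩, ?_, hwx₀.trans hx₀b⟩)
    exact (le_max_left _ _).trans_lt ((le_max_left _ _).trans_lt hw)
  · exact (hwt.2 ⟨h hm₁.1.1, hm₁.1.2⟩).not_gt hmw

theorem LocallyOMinimal.noInterval_image_snd_of_bddAbove (hlo : LocallyOMinimal L M)
    (hdc : DefinablyComplete L M) {A : Set (M × M)} (hA : Def2 L M A)
    (hdom : NoInterval (Prod.fst '' A)) (hbelow : BddBelow (Prod.fst '' A))
    (habove : BddAbove (Prod.fst '' A)) (hfib : ∀ e, NoInterval {x | (e, x) ∈ A}) :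
    NoInterval (Prod.snd '' A) := by
  intro a b hab hsub
  set H : Set (M × M) := {p | ∃ x', a < x' ∧ x' < p.1 ∧ (p.2, x') ∈ A}
  have hH : Def2 L M H := def2 (ex (and (lt (.inr a) (.inl 0))
    (and (lt (.inl 0) (.inl 1)) (rel A hA (.inl 2) (.inl 0)))))
  have hHA (x : M) : {e | (x, e) ∈ H} ⊆ Prod.fst '' A := fun _ ⟨_, _, _, h⟩ => ⟨_, h, rfl⟩
  have hHmono {x x' : M} (hxx' : x ≤ x') {e : M} (he : (x, e) ∈ H) : (x', e) ∈ H :=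
    let ⟨y, hay, hyx, hey⟩ := he
    ⟨y, hay, hyx.trans_le hxx', hey⟩
  have hleast : ∀ x, a < x → ∃ m, IsLeast {e | (x, e) ∈ H} m := by
    intro x hx
    obtain ⟨y, hay, hy⟩ := exists_between (lt_min hx hab)
    obtain ⟨⟨e, y⟩, hey, rfl⟩ := hsub ⟨hay, hy.trans_le (min_le_right _ _)⟩
    exact hlo.exists_isLeast hdc (hH.fiber_fst x) (hdom.mono (hHA x))
      ⟨e, y, hay, hy.trans_le (min_le_left _ _), hey⟩ (hbelow.mono (hHA x))
  set V : Set M := {m | ∃ x, a < x ∧ x < b ∧ IsLeast {e | (x, e) ∈ H} m}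
  have hV : Def1 L M V := def1 (ex (and (lt (.inr a) (.inl 0)) (and (lt (.inl 0) (.inr b))
    (and (rel H hH (.inl 0) (.inl 1))
      (all (imp (rel H hH (.inl 1) (.inl 0)) (le (.inl 2) (.inl 0))))))))
  have hVA : V ⊆ Prod.fst '' A := fun _ ⟨x, _, _, hm⟩ => hHA x hm.1
  obtain ⟨x₀, hax₀, hx₀b⟩ := exists_between hab
  obtain ⟨m₀, hm₀⟩ := hleast x₀ hax₀
  obtain ⟨em, ⟨x₁, hax₁, hx₁b, hem⟩, hemax⟩ := hlo.exists_isGreatest hdc hV (hdom.mono hVA)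
    ⟨m₀, x₀, hax₀, hx₀b, hm₀⟩ (habove.mono hVA)
  -- the least index is `em` all along `(a, x₁]`, so the fibre over `em` accumulates at `a`
  have hconst : ∀ x, a < x → x ≤ x₁ → (x, em) ∈ H := by
    intro x hax hxx₁
    obtain ⟨m, hm⟩ := hleast x hax
    have hmem : m = em :=
      le_antisymm (hemax ⟨x, hax, hxx₁.trans_lt hx₁b, hm⟩) (hem.2 (hHmono hxx₁ hm.1))
    exact hmem ▸ hm.1
  obtain ⟨p, q, hpq, hpqA⟩ := hlo.exists_Ioo_subset_of_inter_Ioc_nonempty (hA.fiber_fst em) hax₁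
    fun x hx => by
      obtain ⟨y, hay, hyx, hy⟩ := hconst x hx.1 hx.2.le
      exact ⟨y, hy, hay, hyx.le⟩
  exact hfib em hpq hpqA

theorem LocallyOMinimal.noInterval_image_snd (hlo : LocallyOMinimal L M)
    (hdc : DefinablyComplete L M) {A : Set (M × M)} (hA : Def2 L M A)
    (hdom : NoInterval (Prod.fst '' A)) (hbelow : BddBelow (Prod.fst '' A))
    (hfib : ∀ e, NoInterval {x | (e, x) ∈ A}) : NoInterval (Prod.snd '' A) := by
  set R : Set (M × M) := {p | ∃ e, e ≤ p.1 ∧ (e, p.2) ∈ A}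
  have hR : Def2 L M R := def2 (ex (and (le (.inl 0) (.inl 1)) (rel A hA (.inl 0) (.inl 2))))
  refine (hlo.noInterval_image_snd_of_isChain hdc hR ?_ fun t => ?_).mono ?_
  · exact Monotone.isChain_range fun t t' htt' x ⟨e, het, hex⟩ => ⟨e, het.trans htt', hex⟩
  · set At : Set (M × M) := {p | p ∈ A ∧ p.1 ≤ t}
    have hAt : Def2 L M At := def2 (and (rel A hA (.inl 0) (.inl 1)) (le (.inl 0) (.inr t)))
    have hAtA : Prod.fst '' At ⊆ Prod.fst '' A := image_mono fun _ h => h.1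
    refine (hlo.noInterval_image_snd_of_bddAbove hdc hAt (hdom.mono hAtA) (hbelow.mono hAtA)
      ⟨t, ?_⟩ fun e => (hfib e).mono fun _ h => h.1).mono ?_
    · rintro _ ⟨p, hp, rfl⟩
      exact hp.2
    · rintro x ⟨e, het, hex⟩
      exact ⟨(e, x), ⟨hex, het⟩, rfl⟩
  · rintro _ ⟨⟨e, x⟩, hex, rfl⟩
    exact ⟨(e, x), ⟨e, le_rfl, hex⟩, rfl⟩

theorem LocallyOMinimal.exists_not_noInterval_of_initial_segments (hlo : LocallyOMinimal L M)
    (hdc : DefinablyComplete L M) {C : Set (M × M)} (hC : Def2 L M C) {q₁ q₂ : M} (hq : q₁ < q₂)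
    (hCsub : ∀ ζ y, (ζ, y) ∈ C → q₁ < ζ ∧ ζ < y) (hCne : ∀ ζ ∈ Ioo q₁ q₂, ∃ y, (ζ, y) ∈ C)
    (hCdown : ∀ ζ y y', (ζ, y) ∈ C → ζ < y' → y' < y → (ζ, y') ∈ C) :
    ∃ y, ¬ NoInterval {ζ | (ζ, y) ∈ C} := by
  by_contra! hni
  -- `D` is the graph of `y ↦ min {ζ | (ζ, y) ∈ C}` and `I` that of the infima of its fibres: the
  -- values of `I` accumulate at `q₁`, but its domain consists of least elements
  set D : Set (M × M) := {p | IsLeast {ζ | (ζ, p.1) ∈ C} p.2}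
  have hD : Def2 L M D := def2 (and (rel C hC (.inl 1) (.inl 0))
    (all (imp (rel C hC (.inl 0) (.inl 1)) (le (.inl 2) (.inl 0)))))
  have hDC {y ζ : M} (h : (y, ζ) ∈ D) : q₁ < ζ ∧ ζ < y := hCsub ζ y h.1
  set I : Set (M × M) := {p | IsGLB {y | (y, p.1) ∈ D} p.2}
  have hI : Def2 L M I := def2 (and (all (imp (rel D hD (.inl 0) (.inl 1)) (le (.inl 2) (.inl 0))))
    (all (imp (all (imp (rel D hD (.inl 0) (.inl 2)) (le (.inl 1) (.inl 0))))
      (le (.inl 0) (.inl 2)))))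
  have hIex {y ζ : M} (h : (y, ζ) ∈ D) : ∃ v, (ζ, v) ∈ I ∧ q₁ < v ∧ v ≤ y := by
    obtain ⟨v, hv⟩ := (hdc _ (hD.fiber_snd ζ) ⟨y, h⟩).2 ⟨ζ, fun _ h' => (hDC h').2.le⟩
    exact ⟨v, hv, (hDC h).1.trans_le (hv.2 fun _ h' => (hDC h').2.le), hv.1 h⟩
  have hIQ : Prod.fst '' I ⊆ {ζ | ∃ y, IsLeast {ζ' | (ζ', y) ∈ C} ζ} := by
    rintro _ ⟨⟨ζ, v⟩, hv, rfl⟩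
    obtain ⟨y, hy⟩ : {y | (y, ζ) ∈ D}.Nonempty := by
      by_contra h
      rw [not_nonempty_iff_eq_empty] at h
      exact not_isMax v (isGLB_empty_iff.1 (h ▸ hv)).isMax
    exact ⟨y, hy⟩
  obtain ⟨p, q, hpq, hpqI⟩ := hlo.exists_Ioo_subset_of_inter_Ioc_nonempty hI.image_snd hq
    fun x hx => by
      obtain ⟨ζ, hq₁ζ, hζx⟩ := exists_between hx.1
      obtain ⟨y, hy⟩ := hCne ζ ⟨hq₁ζ, hζx.trans hx.2⟩
      obtain ⟨y', hζy', hy'⟩ := exists_between (lt_min (hCsub ζ y hy).2 hζx)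
      obtain ⟨m, hm⟩ := hlo.exists_isLeast hdc (hC.fiber_snd y') (hni y')
        ⟨ζ, hCdown ζ y y' hy hζy' (hy'.trans_le (min_le_left _ _))⟩
        ⟨q₁, fun _ h => (hCsub _ _ h).1.le⟩
      obtain ⟨v, hv, hq₁v, hvy'⟩ := hIex hm
      exact ⟨v, ⟨(m, v), hv, rfl⟩, hq₁v, hvy'.trans (hy'.trans_le (min_le_right _ _)).le⟩
  have hQ := noInterval_setOf_isLeast_of_initial_segments (fun ζ y h => (hCsub ζ y h).2) hCdown hni
  refine hlo.noInterval_image_snd hdc hI (hQ.mono hIQ) ⟨q₁, fun ζ h => ?_⟩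
    (fun ζ => noInterval_of_subsingleton fun _ hv _ hv' => hv.unique hv') hpq hpqI
  obtain ⟨y, hy⟩ := hIQ h
  exact (hDC hy).1.le

theorem LocallyOMinimal.not_common_left_endpoint (hlo : LocallyOMinimal L M)
    (hdc : DefinablyComplete L M) {X : Set (M × M)} (hX : Def2 L M X)
    (hfib : ∀ y, NoInterval {x | (y, x) ∈ X}) (ζ : M) {a b : M} (hab : a < b) :
    ¬ ∀ x ∈ Ioo a b, ∃ w, ζ < w ∧ Ioo ζ w ⊆ {y | (y, x) ∈ X} := by
  intro h
  set F : Set (M × M) := {p | (a < p.2 ∧ p.2 < b) ∧ ζ < p.1 ∧ Ioo ζ p.1 ⊆ {y | (y, p.2) ∈ X}}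
  have hF : Def2 L M F := def2 (and (and (lt (.inr a) (.inl 1)) (lt (.inl 1) (.inr b)))
    (and (lt (.inr ζ) (.inl 0))
      (all (imp (and (lt (.inr ζ) (.inl 0)) (lt (.inl 0) (.inl 1))) (rel X hX (.inl 0) (.inl 2))))))
  have hchain : IsChain (· ≤ ·) (range fun t => {x | (t, x) ∈ F}) := by
    rintro _ ⟨t, rfl⟩ _ ⟨t', rfl⟩ -
    wlog htt' : t ≤ t' generalizing t t'
    · exact (this t' t (le_of_not_ge htt')).symm
    by_cases hζt : ζ < t
    · exact Or.inr fun x hx => ⟨hx.1, hζt, fun y hy => hx.2.2 ⟨hy.1, hy.2.trans_le htt'⟩⟩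
    · exact Or.inl fun x hx => absurd hx.2.1 hζt
  refine hlo.noInterval_image_snd_of_isChain hdc hF hchain (fun t p q hpq hsub => ?_) hab
    fun x hx => ?_
  · obtain ⟨x, hx⟩ := nonempty_Ioo.2 hpq
    obtain ⟨y, hy⟩ := nonempty_Ioo.2 (hsub hx).2.1
    exact hfib y hpq fun x' hx' => (hsub hx').2.2 hy
  · obtain ⟨w, hζw, hw⟩ := h x hx
    exact ⟨(w, x), ⟨hx, hζw, hw⟩, rfl⟩

theorem LocallyOMinimal.noInterval_image_snd_of_left_endpoints (hlo : LocallyOMinimal L M)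
    (hdc : DefinablyComplete L M) {X Z : Set (M × M)} (hX : Def2 L M X)
    (hfib : ∀ y, NoInterval {x | (y, x) ∈ X}) (hZ : Def2 L M Z)
    (hZfun : ∀ x ζ ζ', (x, ζ) ∈ Z → (x, ζ') ∈ Z → ζ = ζ') (hfst : BddBelow (Prod.fst '' Z))
    (hZseg : ∀ x ζ, (x, ζ) ∈ Z → ∃ w, ζ < w ∧ Ioo ζ w ⊆ {y | (y, x) ∈ X}) :
    NoInterval (Prod.snd '' Z) := by
  intro q₁ q₂ hq hsub
  set C : Set (M × M) := {p | (q₁ < p.1 ∧ p.1 < q₂) ∧ p.1 < p.2 ∧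
    ∃ x, (x, p.1) ∈ Z ∧ Ioc p.1 p.2 ⊆ {y | (y, x) ∈ X}}
  have hC : Def2 L M C := def2 (and (and (lt (.inr q₁) (.inl 0)) (lt (.inl 0) (.inr q₂)))
    (and (lt (.inl 0) (.inl 1)) (ex (and (rel Z hZ (.inl 0) (.inl 1))
      (all (imp (and (lt (.inl 2) (.inl 0)) (le (.inl 0) (.inl 3))) (rel X hX (.inl 0) (.inl 1))))))))
  obtain ⟨y, hy⟩ := hlo.exists_not_noInterval_of_initial_segments hdc hC hq
    (fun ζ y h => ⟨h.1.1, h.2.1⟩)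
    (fun ζ hζ => by
      obtain ⟨⟨x, ζ⟩, hx, rfl⟩ := hsub hζ
      obtain ⟨w, hζw, hw⟩ := hZseg x ζ hx
      obtain ⟨y, hζy, hyw⟩ := exists_between hζw
      exact ⟨y, hζ, hζy, x, hx, fun y' hy' => hw ⟨hy'.1, hy'.2.trans_lt hyw⟩⟩)
    (fun ζ y y' h hζy' hy'y => ⟨h.1, hζy', h.2.2.imp fun x hx => ⟨hx.1,
      fun y'' hy'' => hx.2 ⟨hy''.1, hy''.2.trans hy'y.le⟩⟩⟩)
  -- each `ζ` with `(ζ, y) ∈ C` is the left end of a segment at a height `x` with `(y, x) ∈ X`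
  set G : Set (M × M) := {p | (y, p.1) ∈ X ∧ p ∈ Z}
  have hG : Def2 L M G := def2 (and (rel X hX (.inr y) (.inl 0)) (rel Z hZ (.inl 0) (.inl 1)))
  refine hy ((hlo.noInterval_image_snd hdc hG ((hfib y).mono ?_) (hfst.mono ?_)
    fun x => noInterval_of_subsingleton fun ζ hζ ζ' hζ' => hZfun x ζ ζ' hζ.2 hζ'.2).mono ?_)
  · rintro _ ⟨p, hp, rfl⟩
    exact hp.1
  · exact image_mono fun _ h => h.2
  · rintro ζ ⟨-, hζy, x, hx, hxX⟩
    exact ⟨(x, ζ), ⟨hxX ⟨hζy, le_rfl⟩, hx⟩, rfl⟩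

theorem LocallyOMinimal.noInterval_image_fst_of_left_endpoints (hlo : LocallyOMinimal L M)
    (hdc : DefinablyComplete L M) {X Z : Set (M × M)} (hX : Def2 L M X)
    (hfib : ∀ y, NoInterval {x | (y, x) ∈ X}) (hZ : Def2 L M Z)
    (hZfun : ∀ x ζ ζ', (x, ζ) ∈ Z → (x, ζ') ∈ Z → ζ = ζ') (hfst : BddBelow (Prod.fst '' Z))
    (hsnd : BddBelow (Prod.snd '' Z))
    (hZseg : ∀ x ζ, (x, ζ) ∈ Z → ∃ w, ζ < w ∧ Ioo ζ w ⊆ {y | (y, x) ∈ X}) :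
    NoInterval (Prod.fst '' Z) := by
  have hrange := hlo.noInterval_image_snd_of_left_endpoints hdc hX hfib hZ hZfun hfst hZseg
  by_cases hZfib : ∃ ζ p q, p < q ∧ Ioo p q ⊆ {x | (x, ζ) ∈ Z}
  · obtain ⟨ζ, p, q, hpq, hpqZ⟩ := hZfib
    exact absurd (fun x hx => hZseg x ζ (hpqZ hx)) (hlo.not_common_left_endpoint hdc hX hfib ζ hpq)
  set Z' : Set (M × M) := {p | (p.2, p.1) ∈ Z}
  have hZ' : Def2 L M Z' := def2 (rel Z hZ (.inl 1) (.inl 0))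
  have himage : Prod.fst '' Z' = Prod.snd '' Z := by ext; simp [Z']
  refine (hlo.noInterval_image_snd hdc hZ' (himage ▸ hrange) (himage ▸ hsnd)
    fun ζ p q hpq hsub => hZfib ⟨ζ, p, q, hpq, hsub⟩).mono ?_
  rintro _ ⟨⟨x, ζ⟩, hx, rfl⟩
  exact ⟨(ζ, x), hx, rfl⟩

theorem LocallyOMinimal.exists_Ioo_subset_image_snd_inter_Ioi (hlo : LocallyOMinimal L M)
    (hdc : DefinablyComplete L M) {X : Set (M × M)} (hX : Def2 L M X) {a b : M} (hab : a < b)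
    (hsub : Ioo a b ⊆ Prod.snd '' X) :
    ∃ c a' b', a' < b' ∧ Ioo a' b' ⊆ Prod.snd '' (X ∩ (Ioi c ×ˢ univ)) := by
  set S : Set (M × M) := {p | ∃ y, p.1 < y ∧ (y, p.2) ∈ X}
  have hS : Def2 L M S := def2 (ex (and (lt (.inl 1) (.inl 0)) (rel X hX (.inl 0) (.inl 2))))
  by_contra! h
  refine hlo.noInterval_image_snd_of_isChain hdc hS
    (Antitone.isChain_range fun t t' htt' x ⟨y, hy, hyx⟩ => ⟨y, htt'.trans_lt hy, hyx⟩)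
    (fun t p q hpq hsub => ?_) hab fun x hx => ?_
  · refine h t p q hpq fun x hx => ?_
    obtain ⟨y, hty, hyx⟩ := hsub hx
    exact ⟨(y, x), ⟨hyx, hty, trivial⟩, rfl⟩
  · obtain ⟨⟨y, x⟩, hyx, rfl⟩ := hsub hx
    obtain ⟨t, ht⟩ := exists_lt y
    exact ⟨(t, x), ⟨y, ht, hyx⟩, rfl⟩

theorem LocallyOMinimal.noInterval_image_snd_of_leftOpen (hlo : LocallyOMinimal L M)
    (hdc : DefinablyComplete L M) {X : Set (M × M)} (hX : Def2 L M X)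
    (hopen : ∀ y x, (y, x) ∈ X → ∃ y' < y, Ioo y' y ⊆ {y | (y, x) ∈ X})
    (hfib : ∀ y, NoInterval {x | (y, x) ∈ X}) : NoInterval (Prod.snd '' X) := by
  intro a₀ b₀ hab₀ hsub₀
  obtain ⟨c, a, b, hab, hc⟩ := hlo.exists_Ioo_subset_image_snd_inter_Ioi hdc hX hab₀ hsub₀
  set En : Set (M × M) := {p | p.2 ∈ leftEndpointsAbove {y | (y, p.1) ∈ X} c}
  have hEn : Def2 L M En := def2 (and (le (.inr c) (.inl 1)) (and
    (or (eq (.inl 1) (.inr c)) (not (rel X hX (.inl 1) (.inl 0))))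
    (ex (and (lt (.inl 2) (.inl 0))
      (all (imp (and (lt (.inl 3) (.inl 0)) (lt (.inl 0) (.inl 1))) (rel X hX (.inl 0) (.inl 2))))))))
  set Z : Set (M × M) := {p | (a < p.1 ∧ p.1 < b) ∧ IsLeast {ζ | (p.1, ζ) ∈ En} p.2}
  have hZ : Def2 L M Z := def2 (and (and (lt (.inr a) (.inl 0)) (lt (.inl 0) (.inr b)))
    (and (rel En hEn (.inl 0) (.inl 1)) (all (imp (rel En hEn (.inl 1) (.inl 0))
      (le (.inl 2) (.inl 0))))))
  refine hlo.noInterval_image_fst_of_left_endpoints hdc hX hfib hZ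
    (fun x ζ ζ' h h' => h.2.unique h'.2) ⟨a, ?_⟩ ⟨c, ?_⟩ (fun x ζ h => h.2.1.2.2) hab
    fun x hx => ?_
  · rintro _ ⟨p, hp, rfl⟩
    exact hp.1.1.le
  · rintro _ ⟨p, hp, rfl⟩
    exact hp.2.1.1
  · obtain ⟨⟨y, x⟩, ⟨hy, hcy, -⟩, rfl⟩ := hc hx
    obtain ⟨ζ, hζ⟩ := hlo.exists_isLeast hdc (hEn.fiber_fst x) (noInterval_leftEndpointsAbove _ c)
      (hdc.leftEndpointsAbove_nonempty (hX.fiber_snd x) (fun y hy => hopen y x hy) hy hcy)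
      ⟨c, fun _ h => h.1⟩
    exact ⟨(x, ζ), ⟨hx, hζ⟩, rfl⟩

end Families

section LocallyConstantPart

variable {M : Type*} [LinearOrder M]

def locallyConstantPart (Γ : Set (M × M)) : Set (M × M) :=
  {p | p ∈ Γ ∧ ∃ y₁ y₂ x₁ x₂, (y₁ < p.1 ∧ p.1 < y₂) ∧ (x₁ < p.2 ∧ p.2 < x₂) ∧
    (∀ y, y₁ < y → y < y₂ → (y, p.2) ∈ Γ) ∧
    ∀ y x, y₁ < y → y < y₂ → x₁ < x → x < x₂ → (y, x) ∈ Γ → x = p.2}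

lemma exists_Ioo_subset_of_mem_locallyConstantPart {Γ : Set (M × M)} {y x : M}
    (h : (y, x) ∈ locallyConstantPart Γ) :
    ∃ y' < y, Ioo y' y ⊆ {y | (y, x) ∈ locallyConstantPart Γ} := by
  obtain ⟨-, y₁, y₂, x₁, x₂, ⟨hy₁, hy₂⟩, hx, hseg, hbox⟩ := h
  exact ⟨y₁, hy₁, fun y' hy' => ⟨hseg y' hy'.1 (hy'.2.trans hy₂), y₁, y₂, x₁, x₂,
    ⟨hy'.1, hy'.2.trans hy₂⟩, hx, hseg, hbox⟩⟩

lemma noInterval_fiber_locallyConstantPart [DenselyOrdered M] (Γ : Set (M × M)) (y : M) :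
    NoInterval {x | (y, x) ∈ locallyConstantPart Γ} := by
  intro p q hpq hsub
  obtain ⟨x, hpx, hxq⟩ := exists_between hpq
  obtain ⟨-, y₁, y₂, x₁, x₂, ⟨hy₁, hy₂⟩, ⟨hx₁, hx₂⟩, -, hbox⟩ := hsub ⟨hpx, hxq⟩
  obtain ⟨x', hxx', hx'⟩ := exists_between (lt_min hxq hx₂)
  have hx'Γ := (hsub ⟨hpx.trans hxx', hx'.trans_le (min_le_left _ _)⟩).1
  exact hxx'.ne' (hbox y x' hy₁ hy₂ (hx₁.trans hxx') (hx'.trans_le (min_le_right _ _)) hx'Γ)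

lemma setOf_eq_locallyConstantPart [NoMaxOrder M] [NoMinOrder M] [TopologicalSpace M]
    [OrderTopology M] (Γ : Set (M × M)) :
    {p : M × M | p ∈ Γ ∧ ∃ I J : Set M, IsOInterval I ∧ IsOInterval J ∧ p.1 ∈ I ∧ p.2 ∈ J ∧
      ∃ c : M, (I ×ˢ J) ∩ Γ = I ×ˢ {c}} = locallyConstantPart Γ := by
  ext ⟨y₀, x₀⟩
  constructor
  · rintro ⟨hp, I, J, hI, hJ, hyI, hxJ, c, hIJ⟩
    have hmem {y x : M} (hy : y ∈ I) (hx : x ∈ J) : (y, x) ∈ Γ ↔ x = c := by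
      simpa [hy, hx] using Set.ext_iff.1 hIJ (y, x)
    obtain ⟨y₁, y₂, hy₀, hyI'⟩ := mem_nhds_iff_exists_Ioo_subset.1 (hI.isOpen.mem_nhds hyI)
    obtain ⟨x₁, x₂, hx₀, hxJ'⟩ := mem_nhds_iff_exists_Ioo_subset.1 (hJ.isOpen.mem_nhds hxJ)
    have hx₀c : x₀ = c := (hmem hyI hxJ).1 hp
    refine ⟨hp, y₁, y₂, x₁, x₂, hy₀, hx₀, fun y hy₁ hy₂ => ?_, fun y x hy₁ hy₂ hx₁ hx₂ h => ?_⟩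
    · exact (hmem (hyI' ⟨hy₁, hy₂⟩) hxJ).2 hx₀c
    · exact hx₀c ▸ (hmem (hyI' ⟨hy₁, hy₂⟩) (hxJ' ⟨hx₁, hx₂⟩)).1 h
  · rintro ⟨hp, y₁, y₂, x₁, x₂, hy₀, hx₀, hseg, hbox⟩
    refine ⟨hp, Ioo y₁ y₂, Ioo x₁ x₂, .inl ⟨y₁, y₂, rfl⟩, .inl ⟨x₁, x₂, rfl⟩, hy₀, hx₀, x₀, ?_⟩
    ext ⟨y, x⟩
    simp only [mem_inter_iff, mem_prod, mem_singleton_iff]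
    constructor
    · rintro ⟨⟨hy, hx⟩, h⟩
      exact ⟨hy, hbox y x hy.1 hy.2 hx.1 hx.2 h⟩
    · rintro ⟨hy, rfl⟩
      exact ⟨⟨hy, hx₀⟩, hseg y hy.1 hy.2⟩

variable {L : FirstOrder.Language} [L.IsOrdered] [L.Structure M] [L.OrderedStructure M]

lemma Def2.locallyConstantPart {Γ : Set (M × M)} (hΓ : Def2 L M Γ) :
    Def2 L M (locallyConstantPart Γ) :=
  def2 (and (rel Γ hΓ (.inl 0) (.inl 1)) (ex (ex (ex (ex (and
    (and (lt (.inl 3) (.inl 4)) (lt (.inl 4) (.inl 2)))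
    (and (and (lt (.inl 1) (.inl 5)) (lt (.inl 5) (.inl 0)))
    (and (all (imp (lt (.inl 4) (.inl 0)) (imp (lt (.inl 0) (.inl 3))
      (rel Γ hΓ (.inl 0) (.inl 6)))))
    (all (all (imp (lt (.inl 5) (.inl 1)) (imp (lt (.inl 1) (.inl 4)) (imp (lt (.inl 3) (.inl 0))
      (imp (lt (.inl 0) (.inl 2)) (imp (rel Γ hΓ (.inl 1) (.inl 0)) (eq (.inl 0) (.inl 7)))))))))))))))))

end LocallyConstantPart

end Paper

open Paper

theorem snd_proj_of_locally_constant_part_discrete_closed_general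
    {L : FirstOrder.Language} {M : Type*} [L.IsOrdered] [LinearOrder M] [L.Structure M]
    [L.OrderedStructure M] [DenselyOrdered M] [NoMaxOrder M] [NoMinOrder M]
    [TopologicalSpace M] [OrderTopology M]
    (hlo : LocallyOMinimal L M) (hdc : DefinablyComplete L M)
    (Γ : Set (M × M)) (hΓ : Def2 L M Γ) :
    Paper.IsDiscrete (Prod.snd '' {p : M × M | p ∈ Γ ∧
      ∃ I J : Set M, IsOInterval I ∧ IsOInterval J ∧ p.1 ∈ I ∧ p.2 ∈ J ∧
        ∃ c : M, (I ×ˢ J) ∩ Γ = I ×ˢ {c}}) ∧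
    IsClosed (Prod.snd '' {p : M × M | p ∈ Γ ∧
      ∃ I J : Set M, IsOInterval I ∧ IsOInterval J ∧ p.1 ∈ I ∧ p.2 ∈ J ∧
        ∃ c : M, (I ×ˢ J) ∩ Γ = I ×ˢ {c}}) := by
  rw [setOf_eq_locallyConstantPart]
  have hX := hΓ.locallyConstantPart
  exact hlo.isDiscrete_and_isClosed hX.image_snd <| hlo.noInterval_image_snd_of_leftOpen hdc hX
    (fun _ _ h => exists_Ioo_subset_of_mem_locallyConstantPart h)
    (noInterval_fiber_locallyConstantPart Γ)

/-- In a definably complete locally o-minimal structure, let `Γ ⊆ M²` be a definable set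
all of whose vertical fibers are discrete, and let `X` be the set of points of `Γ` having
an open box neighborhood meeting `Γ` in the graph of a constant function. Then the
projection of `X` to the second coordinate is discrete and closed. -/
theorem snd_proj_of_locally_constant_part_discrete_closed
    {L : FirstOrder.Language} {M : Type*} [L.IsOrdered] [LinearOrder M] [L.Structure M]
    [L.OrderedStructure M] [DenselyOrdered M] [NoMaxOrder M] [NoMinOrder M]
    [TopologicalSpace M] [OrderTopology M]
    (hlo : LocallyOMinimal L M) (hdc : DefinablyComplete L M)
    (Γ : Set (M × M)) (hΓ : Def2 L M Γ)
    (hfib : ∀ y : M, Paper.IsDiscrete {x : M | (y, x) ∈ Γ}) :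
    Paper.IsDiscrete (Prod.snd '' {p : M × M | p ∈ Γ ∧
      ∃ I J : Set M, IsOInterval I ∧ IsOInterval J ∧ p.1 ∈ I ∧ p.2 ∈ J ∧
        ∃ c : M, (I ×ˢ J) ∩ Γ = I ×ˢ {c}}) ∧
    IsClosed (Prod.snd '' {p : M × M | p ∈ Γ ∧
      ∃ I J : Set M, IsOInterval I ∧ IsOInterval J ∧ p.1 ∈ I ∧ p.2 ∈ J ∧
        ∃ c : M, (I ×ˢ J) ∩ Γ = I ×ˢ {c}}) :=
  snd_proj_of_locally_constant_part_discrete_closed_general hlo hdc Γ hΓ
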